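/- Let n ≥ 1. The number of points [y_0 : ⋯ : y_n] in P^n(Q) of naive height at most B (where the height of a point with coprime integer coordinates is max_i |y_i|) is asymptotically equivalent to (2^n/ζ(n+1)) · B^{n+1} as B → ∞. -/

import Mathlib

/-!
By Möbius inversion over the gcd, the number of primitive vectors in `[-b, b]^m` is
`∑_{d ≤ b} μ(d) ((2 ⌊b/d⌋ + 1)^m - 1)`. After division by `B^m` (with `b = ⌊B⌋`) the `d`-th
term tends to `μ(d) (2/d)^m` and is bounded by `(3/d)^m`, which is summable for `m ≥ 2`;
dominated convergence gives the limit `2^m ∑_d μ(d)/d^m = 2^m / ζ(m)`. Each point of `ℙⁿ(ℚ)`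
corresponds to exactly two primitive vectors `±y`.
-/

open Filter Topology ArithmeticFunction Finset

lemma sum_divisors_moebius (n : ℕ) :
    ∑ d ∈ n.divisors, (moebius d : ℤ) = if n = 1 then 1 else 0 := by
  have h := congrArg (· n) (moebius_mul_coe_zeta : (moebius * ↑zeta : ArithmeticFunction ℤ) = 1)
  simpa only [coe_mul_zeta_apply, one_apply] using h

lemma sum_range_moebius_ite_dvd {g b : ℕ} (hg : g ≠ 0) (hgb : g ≤ b) :
    ∑ d ∈ range (b + 1), (if d ∣ g then (moebius d : ℤ) else 0) = if g = 1 then 1 else 0 := by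
  have hdiv : {d ∈ range (b + 1) | d ∣ g} = g.divisors := by
    ext d
    simp only [mem_filter, mem_range, Nat.mem_divisors]
    exact ⟨fun h => ⟨h.2, hg⟩, fun h =>
      ⟨Nat.lt_add_one_of_le ((Nat.le_of_dvd (Nat.pos_of_ne_zero hg) h.1).trans hgb), h.1⟩⟩
  rw [← sum_filter, hdiv, sum_divisors_moebius]

lemma tsum_moebius_div_pow_eq_inv {m : ℕ} (hm : 2 ≤ m) :
    ∑' d : ℕ, (moebius d : ℝ) / (d : ℝ) ^ m = (∑' k : ℕ, 1 / ((k : ℝ) + 1) ^ m)⁻¹ := by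
  have hs : 1 < (m : ℂ).re := by simp only [Complex.natCast_re]; exact_mod_cast hm
  have hμ : LSeries (fun n => ((moebius n : ℤ) : ℂ)) m =
      ((∑' d : ℕ, (moebius d : ℝ) / (d : ℝ) ^ m : ℝ) : ℂ) := by
    rw [Complex.ofReal_tsum]
    refine tsum_congr fun d => ?_
    rcases eq_or_ne d 0 with rfl | hd
    · simp [LSeries.term_zero]
    · rw [LSeries.term_of_ne_zero hd, Complex.cpow_natCast]
      push_cast
      rfl
  have hζ : LSeries (fun n => ((zeta n : ℕ) : ℂ)) m =
      ((∑' k : ℕ, 1 / ((k : ℝ) + 1) ^ m : ℝ) : ℂ) := by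
    rw [LSeries, (LSeriesSummable_zeta_iff.mpr hs).tsum_eq_zero_add, LSeries.term_zero,
      zero_add, Complex.ofReal_tsum]
    refine tsum_congr fun k => ?_
    rw [LSeries.term_of_ne_zero k.succ_ne_zero, Complex.cpow_natCast]
    simp
  have key := LSeries_zeta_mul_Lseries_moebius hs
  rw [hζ, hμ, ← Complex.ofReal_mul, Complex.ofReal_eq_one] at key
  exact eq_inv_of_mul_eq_one_right key

lemma Int.mem_Icc_neg_natCast_iff {z : ℤ} {b : ℕ} : z ∈ Icc (-(b : ℤ)) b ↔ z.natAbs ≤ b := by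
  rw [mem_Icc, ← abs_le, Int.abs_eq_natAbs, Nat.cast_le]

lemma Int.filter_dvd_Icc_neg_natCast {b d : ℕ} (hd : 0 < d) :
    {x ∈ Icc (-(b : ℤ)) b | (d : ℤ) ∣ x} =
      (Icc (-((b / d : ℕ) : ℤ)) ((b / d : ℕ) : ℤ)).map
        ⟨(· * (d : ℤ)), mul_left_injective₀ (by omega)⟩ := by
  ext x
  simp only [mem_filter, Finset.mem_map, Function.Embedding.coeFn_mk,
    Int.mem_Icc_neg_natCast_iff]
  constructor
  · rintro ⟨hx, k, rfl⟩
    refine ⟨k, ?_, mul_comm _ _⟩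
    rw [Int.natAbs_mul, Int.natAbs_natCast] at hx
    exact (Nat.le_div_iff_mul_le hd).2 (by rwa [mul_comm])
  · rintro ⟨k, hk, rfl⟩
    refine ⟨?_, dvd_mul_left _ _⟩
    rw [Int.natAbs_mul, Int.natAbs_natCast]
    exact (Nat.le_div_iff_mul_le hd).1 hk

lemma Int.card_filter_dvd_Icc_neg_natCast {b d : ℕ} (hd : 0 < d) :
    #{x ∈ Icc (-(b : ℤ)) b | (d : ℤ) ∣ x} = 2 * (b / d) + 1 := by
  rw [Int.filter_dvd_Icc_neg_natCast hd, card_map, Int.card_Icc]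
  omega

/-- `(2 ⌊B/d⌋ + 1)^m - 1` counts the nonzero vectors of `[-⌊B⌋, ⌊B⌋]^m` divisible by `d`. -/
noncomputable def moebiusBoxTerm (m : ℕ) (B : ℝ) (d : ℕ) : ℝ :=
  moebius d * ((2 * (⌊B⌋₊ / d : ℕ) + 1 : ℝ) ^ m - 1) / B ^ m

lemma moebiusBoxTerm_eq_zero_of_floor_lt {m d : ℕ} {B : ℝ} (h : ⌊B⌋₊ < d) :
    moebiusBoxTerm m B d = 0 := by
  simp [moebiusBoxTerm, Nat.div_eq_of_lt h]

lemma tendsto_nat_floor_div_div_atTop (d : ℕ) :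
    Tendsto (fun B : ℝ => ((⌊B⌋₊ / d : ℕ) : ℝ) / B) atTop (𝓝 (d : ℝ)⁻¹) := by
  simp_rw [← Nat.floor_div_natCast, div_eq_inv_mul _ (d : ℝ)]
  exact tendsto_nat_floor_mul_div_atTop (by positivity)

lemma tendsto_moebiusBoxTerm {m : ℕ} (hm : m ≠ 0) (d : ℕ) :
    Tendsto (fun B => moebiusBoxTerm m B d) atTop (𝓝 (moebius d * (2 / d : ℝ) ^ m)) := by
  have hinv : Tendsto (fun B : ℝ => B⁻¹) atTop (𝓝 0) := tendsto_inv_atTop_zero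
  have hlim := ((((tendsto_nat_floor_div_div_atTop d).const_mul 2).add hinv).pow m).sub
    (hinv.pow m) |>.const_mul (moebius d : ℝ)
  rw [add_zero, zero_pow hm, sub_zero, ← div_eq_mul_inv] at hlim
  refine hlim.congr' ?_
  filter_upwards [eventually_ne_atTop 0] with B hB
  have hsum : 2 * (((⌊B⌋₊ / d : ℕ) : ℝ) / B) + B⁻¹ = (2 * (⌊B⌋₊ / d : ℕ) + 1) / B := by
    field_simp
  rw [hsum, div_pow, inv_pow, moebiusBoxTerm, mul_div_assoc, sub_div, one_div]

lemma two_mul_add_one_pow_sub_one_le (k m : ℕ) : (2 * k + 1 : ℝ) ^ m - 1 ≤ (3 * k) ^ m := by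
  rcases Nat.eq_zero_or_pos k with rfl | hk
  · simp
  · have : (2 * k + 1 : ℝ) ≤ 3 * k := by
      have : (1 : ℝ) ≤ k := by exact_mod_cast hk
      linarith
    linarith [pow_le_pow_left₀ (by positivity) this m]

lemma abs_moebiusBoxTerm_le (m : ℕ) (B : ℝ) (d : ℕ) :
    |moebiusBoxTerm m B d| ≤ (3 / d : ℝ) ^ m := by
  rcases le_or_gt B 0 with hB | hB
  · simp [moebiusBoxTerm, Nat.floor_eq_zero.2 (hB.trans_lt one_pos)]
    positivity
  have hk : ((⌊B⌋₊ / d : ℕ) : ℝ) ≤ B / d := by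
    rw [← Nat.floor_div_natCast]
    exact Nat.floor_le (by positivity)
  have hnum : 0 ≤ (2 * (⌊B⌋₊ / d : ℕ) + 1 : ℝ) ^ m - 1 :=
    sub_nonneg.2 (one_le_pow₀ (by linarith [(⌊B⌋₊ / d : ℕ).cast_nonneg (α := ℝ)]))
  calc |moebiusBoxTerm m B d|
      = |(moebius d : ℝ)| * ((2 * (⌊B⌋₊ / d : ℕ) + 1 : ℝ) ^ m - 1) / B ^ m := by
        rw [moebiusBoxTerm, abs_div, abs_mul, abs_of_nonneg hnum, abs_of_pos (pow_pos hB m)]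
    _ ≤ 1 * (3 * (B / d)) ^ m / B ^ m := by
        gcongr
        · exact_mod_cast abs_moebius_le_one
        · exact (two_mul_add_one_pow_sub_one_le _ m).trans (by gcongr)
    _ = (3 / d : ℝ) ^ m := by
        rw [one_mul, ← div_pow]
        field_simp

section PrimitiveVectors

variable {ι : Type*} [Fintype ι]

lemma natAbs_gcd_dvd_iff (y : ι → ℤ) (d : ℕ) :
    d ∣ (univ.gcd y).natAbs ↔ ∀ i, (d : ℤ) ∣ y i := by
  simp only [← Int.natCast_dvd, Finset.dvd_gcd_iff, mem_univ, true_implies]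

variable (ι) [DecidableEq ι]

noncomputable def intBox (b : ℕ) : Finset (ι → ℤ) := Fintype.piFinset fun _ => Icc (-(b : ℤ)) b

noncomputable def primitiveVectors (b : ℕ) : Finset (ι → ℤ) := {y ∈ intBox ι b | univ.gcd y = 1}

variable {ι}

lemma mem_intBox {b : ℕ} {y : ι → ℤ} : y ∈ intBox ι b ↔ ∀ i, (y i).natAbs ≤ b := by
  simp only [intBox, Fintype.mem_piFinset, Int.mem_Icc_neg_natCast_iff]

lemma card_filter_dvd_intBox {b d : ℕ} (hd : 0 < d) :
    #{y ∈ intBox ι b | ∀ i, (d : ℤ) ∣ y i} = (2 * (b / d) + 1) ^ Fintype.card ι := by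
  have hpi : {y ∈ intBox ι b | ∀ i, (d : ℤ) ∣ y i} =
      Fintype.piFinset fun _ => {x ∈ Icc (-(b : ℤ)) b | (d : ℤ) ∣ x} := by
    ext y
    simp only [intBox, mem_filter, Fintype.mem_piFinset, forall_and]
  rw [hpi, Fintype.card_piFinset, prod_const, card_univ, Int.card_filter_dvd_Icc_neg_natCast hd]

lemma sum_range_moebius_ite_dvd_eq_ite_gcd_eq_one {b : ℕ} {y : ι → ℤ}
    (hy : y ∈ (intBox ι b).erase 0) :
    ∑ d ∈ range (b + 1), (if ∀ i, (d : ℤ) ∣ y i then (moebius d : ℤ) else 0) =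
      if univ.gcd y = 1 then 1 else 0 := by
  obtain ⟨hy0, hyb⟩ := mem_erase.1 hy
  obtain ⟨i, hi⟩ : ∃ i, y i ≠ 0 := by
    by_contra! h
    exact hy0 (funext h)
  have hg0 : univ.gcd y ≠ 0 := fun h => hi (gcd_eq_zero_iff.1 h i (mem_univ i))
  have hgb : (univ.gcd y).natAbs ≤ b :=
    (Int.natAbs_le_of_dvd_ne_zero (gcd_dvd (mem_univ i)) hi).trans (mem_intBox.1 hyb i)
  have hg1 : (univ.gcd y).natAbs = 1 ↔ univ.gcd y = 1 := by
    have := Int.nonneg_of_normalize_eq_self (normalize_gcd (s := univ) (f := y))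
    omega
  simp_rw [← natAbs_gcd_dvd_iff, sum_range_moebius_ite_dvd (Int.natAbs_ne_zero.2 hg0) hgb, hg1]

theorem card_primitiveVectors (b : ℕ) :
    (#(primitiveVectors ι b) : ℤ) =
      ∑ d ∈ range (b + 1), moebius d * ((2 * (b / d : ℕ) + 1) ^ Fintype.card ι - 1 : ℤ) := by
  have hprim : primitiveVectors ι b = {y ∈ (intBox ι b).erase 0 | univ.gcd y = 1} := by
    have hgcd0 : univ.gcd (0 : ι → ℤ) = 0 := gcd_eq_zero_iff.2 fun _ _ => rfl
    rw [filter_erase, erase_eq_of_notMem (by simp [hgcd0]), primitiveVectors]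
  calc (#(primitiveVectors ι b) : ℤ)
      = ∑ y ∈ (intBox ι b).erase 0, if univ.gcd y = 1 then 1 else 0 := by
        rw [hprim, card_filter]; push_cast; rfl
    _ = ∑ y ∈ (intBox ι b).erase 0, ∑ d ∈ range (b + 1),
          if ∀ i, (d : ℤ) ∣ y i then (moebius d : ℤ) else 0 :=
        (Finset.sum_congr rfl fun y hy => sum_range_moebius_ite_dvd_eq_ite_gcd_eq_one hy).symm
    _ = ∑ d ∈ range (b + 1),
          moebius d * (#{y ∈ (intBox ι b).erase 0 | ∀ i, (d : ℤ) ∣ y i} : ℤ) := by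
        rw [sum_comm]
        refine sum_congr rfl fun d _ => ?_
        rw [card_filter]
        push_cast
        rw [mul_sum]
        refine sum_congr rfl fun y _ => ?_
        split_ifs <;> simp
    _ = _ := by
        refine sum_congr rfl fun d _ => ?_
        rcases Nat.eq_zero_or_pos d with rfl | hd
        · simp
        rw [filter_erase, card_erase_of_mem (by simp [mem_intBox]), card_filter_dvd_intBox hd]
        push_cast [Nat.one_le_pow _ _ (by omega : 0 < 2 * (b / d) + 1)]
        rfl

lemma tsum_moebiusBoxTerm (B : ℝ) :
    ∑' d, moebiusBoxTerm (Fintype.card ι) B d =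
      (#(primitiveVectors ι ⌊B⌋₊) : ℝ) / B ^ Fintype.card ι := by
  rw [tsum_eq_sum (s := range (⌊B⌋₊ + 1))
    fun d hd => moebiusBoxTerm_eq_zero_of_floor_lt (by simpa using hd)]
  simp only [moebiusBoxTerm, ← sum_div]
  congr 1
  exact_mod_cast (card_primitiveVectors ⌊B⌋₊).symm

theorem tendsto_card_primitiveVectors_div_pow (h : 2 ≤ Fintype.card ι) :
    Tendsto (fun B : ℝ => (#(primitiveVectors ι ⌊B⌋₊) : ℝ) / B ^ Fintype.card ι) atTop
      (𝓝 (2 ^ Fintype.card ι / ∑' k : ℕ, 1 / ((k : ℝ) + 1) ^ Fintype.card ι)) := by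
  have hbound : Summable fun d : ℕ => (3 / d : ℝ) ^ Fintype.card ι := by
    simp_rw [div_pow, div_eq_mul_inv ((3 : ℝ) ^ Fintype.card ι)]
    exact (Real.summable_nat_pow_inv.2 h).mul_left _
  have hlim := tendsto_tsum_of_dominated_convergence hbound (tendsto_moebiusBoxTerm (by omega))
    (.of_forall fun B d => (Real.norm_eq_abs _).trans_le (abs_moebiusBoxTerm_le _ B d))
  simp only [tsum_moebiusBoxTerm] at hlim
  convert hlim using 2
  simp_rw [div_pow, mul_div_left_comm _ ((2 : ℝ) ^ _), tsum_mul_left,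
    tsum_moebius_div_pow_eq_inv h, div_eq_mul_inv]

lemma coe_primitiveVectors_floor {B : ℝ} (hB : 0 ≤ B) :
    {y : ι → ℤ | univ.gcd y = 1 ∧ ∀ i, |(y i : ℝ)| ≤ B} = ↑(primitiveVectors ι ⌊B⌋₊) := by
  ext y
  simp [primitiveVectors, mem_intBox, ← Int.cast_abs, ← Nat.cast_natAbs, Nat.le_floor_iff hB,
    and_comm]

end PrimitiveVectors

/-- Counting rational points of bounded naive height on `ℙⁿ(ℚ)`: points are
represented by coprime integer tuples `(y₀, …, y_n)`, unique up to sign (whence the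
division by `2`), with height `max_i |y_i|`.  The number of points of height at most
`B` is asymptotically `(2^n / ζ(n+1)) · B^(n+1)` as `B → ∞`. -/
theorem stmt_2 (n : ℕ) (hn : 1 ≤ n) :
    Tendsto
      (fun B : ℝ =>
        (({y : Fin (n + 1) → ℤ |
            Finset.univ.gcd y = 1 ∧ ∀ i, |((y i : ℝ))| ≤ B}.ncard : ℝ) / 2) / B ^ (n + 1))
      atTop
      (nhds ((2 : ℝ) ^ n / ∑' k : ℕ, (1 : ℝ) / (k + 1) ^ (n + 1))) := by
  have hlim := (tendsto_card_primitiveVectors_div_pow (ι := Fin (n + 1))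
    (by rw [Fintype.card_fin]; omega)).div_const 2
  rw [Fintype.card_fin, div_right_comm, pow_succ, mul_div_cancel_right₀ _ two_ne_zero] at hlim
  refine hlim.congr' ?_
  filter_upwards [eventually_ge_atTop 0] with B hB
  rw [coe_primitiveVectors_floor hB, Set.ncard_coe_finset, div_right_comm]
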